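/- arXiv:0812.1373 — 5 statements merged into one kernel-verified Lean document; each statement's English description precedes it below -/
import Mathlib

section
/- Let L be a line (1-dimensional affine subspace) in R^3, let e be a point in R^3 not on L, and let v(e) = ω × (e − a) be the velocity of e under the infinitesimal rotation about L with axis direction u (a unit vector spanning the direction of L), where a ∈ L and ω = u. Then a nonzero vector w ∈ R^3 is orthogonal to v(e) if and only if the line through e with direction w is projectively incident with L, i.e., the two lines either intersect in R^3 or have linearly dependent direction vectors (are parallel). -/
open Matrix

/-!
The triple product `w ⬝ᵥ u ⨯₃ (e - a)` is `det ![w, u, e - a]`, so it vanishes exactly when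
`w, u, e - a` are linearly dependent. Unless `w` and `u` are already dependent (parallel lines),
this means `e - a ∈ span {w, u}`, which is precisely the condition that the two lines meet.
-/

theorem triple_product_eq_zero_iff_not_linearIndependent {K : Type*} [Field K]
    (w u v : Fin 3 → K) : w ⬝ᵥ u ⨯₃ v = 0 ↔ ¬LinearIndependent K ![w, u, v] := by
  rw [triple_product_eq_det, ← not_iff_not, not_not]
  exact (linearIndependent_rows_iff_isUnit.trans (isUnit_iff_isUnit_det (of ![w, u, v])) |>.trans
    isUnit_iff_ne_zero).symm

theorem not_linearIndependent_fin3_iff {K V : Type*} [DivisionRing K] [AddCommGroup V]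
    [Module K V] (w u v : V) :
    ¬LinearIndependent K ![w, u, v] ↔
      ¬LinearIndependent K ![w, u] ∨ v ∈ Submodule.span K {w, u} := by
  have hsnoc : ![w, u, v] = Fin.snoc ![w, u] v := by
    ext i; fin_cases i <;> rfl
  rw [hsnoc, linearIndependent_finSnoc, range_cons_cons_empty, not_and_or, not_not]

theorem exists_add_smul_eq_add_smul_iff_sub_mem_span {R M : Type*} [Ring R] [AddCommGroup M]
    [Module R M] (a u e w : M) :
    (∃ s t : R, e + s • w = a + t • u) ↔ e - a ∈ Submodule.span R {w, u} := by
  rw [Submodule.mem_span_pair]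
  constructor
  · rintro ⟨s, t, h⟩
    exact ⟨-s, t, by rw [neg_smul, ← sub_eq_iff_eq_add.mpr h.symm]; abel⟩
  · rintro ⟨s, t, h⟩
    exact ⟨-s, t, by rw [neg_smul, ← add_sub_cancel a e, ← h]; abel⟩

theorem endpoint_velocity_orthogonal_iff_incident_general
    (a u e w : Fin 3 → ℝ) :
    w ⬝ᵥ (crossProduct u (e - a)) = 0 ↔
      ((∃ s t : ℝ, e + s • w = a + t • u) ∨ ¬ LinearIndependent ℝ ![w, u]) := by
  rw [triple_product_eq_zero_iff_not_linearIndependent, not_linearIndependent_fin3_iff,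
    exists_add_smul_eq_add_smul_iff_sub_mem_span, or_comm]

/-- For a line `L = {a + t • u}` in `ℝ³` with unit direction `u`, a point `e ∉ L`,
and the velocity `v = u ×₃ (e - a)` of `e` under the infinitesimal rotation about `L`,
a nonzero vector `w` is orthogonal to `v` iff the line through `e` with direction `w`
is projectively incident with `L` (they intersect, or their directions are dependent). -/
theorem endpoint_velocity_orthogonal_iff_incident
    (a u e w : Fin 3 → ℝ) (hu : u ⬝ᵥ u = 1)
    (he : ∀ t : ℝ, e ≠ a + t • u) (hw : w ≠ 0) :
    w ⬝ᵥ (crossProduct u (e - a)) = 0 ↔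
      ((∃ s t : ℝ, e + s • w = a + t • u) ∨ ¬ LinearIndependent ℝ ![w, u]) :=
  endpoint_velocity_orthogonal_iff_incident_general a u e w
end

section
/- Let A_1, ..., A_{n-1} be lines in R^3 and e a point in R^3. For each i, let v_i = u_i × (e − a_i) be the velocity of e under infinitesimal rotation about A_i (where a_i ∈ A_i and u_i is a unit direction vector of A_i). Then span{v_1, ..., v_{n-1}} ≠ R^3 if and only if there exists a line through e which is projectively incident with every A_i. -/
/-!
By the triple product formula, `w ⬝ᵥ u ×₃ (e - a) = det ![w, u, e - a]`, which vanishes iff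
`e - a` lies in the span of `w` and `u` (i.e. the line through `e` with direction `w` meets
`a + ℝ u`) or `w` and `u` are parallel. The velocities fail to span iff some `w ≠ 0` is
orthogonal to all of them.
-/

open Matrix

theorem span_ne_top_iff_exists_dotProduct_eq_zero {K n : Type*} [Field K] [Fintype n]
    [DecidableEq n] (S : Set (n → K)) :
    Submodule.span K S ≠ ⊤ ↔ ∃ w : n → K, w ≠ 0 ∧ ∀ x ∈ S, w ⬝ᵥ x = 0 := by
  rw [Ne, ← Submodule.dualAnnihilator_eq_bot_iff, ← Ne, Submodule.ne_bot_iff,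
    (dotProductEquiv K n).surjective.exists]
  refine exists_congr fun w => ?_
  rw [← SetLike.mem_coe, Submodule.coe_dualAnnihilator_span]
  simp [Set.subset_def, and_comm]

theorem Matrix.det_eq_zero_iff_not_linearIndependent_rows {K m : Type*} [Field K] [Fintype m]
    [DecidableEq m] (A : Matrix m m K) : A.det = 0 ↔ ¬ LinearIndependent K A.row := by
  rw [linearIndependent_rows_iff_isUnit, isUnit_iff_isUnit_det, isUnit_iff_ne_zero, not_not]

theorem det_of_vec3_eq_zero_iff {K : Type*} [Field K] (w u c : Fin 3 → K) :
    det (of ![w, u, c]) = 0 ↔ c ∈ Submodule.span K {w, u} ∨ ¬ LinearIndependent K ![w, u] := by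
  have hrows : (of ![w, u, c]).row = Fin.snoc ![w, u] c := by
    ext j; fin_cases j <;> rfl
  rw [det_eq_zero_iff_not_linearIndependent_rows, hrows, linearIndependent_finSnoc, range_cons,
    range_cons, range_empty, Set.union_empty, Set.singleton_union]
  tauto

theorem dotProduct_crossProduct_eq_zero_iff {K : Type*} [Field K] (w u c : Fin 3 → K) :
    w ⬝ᵥ u ⨯₃ c = 0 ↔ c ∈ Submodule.span K {w, u} ∨ ¬ LinearIndependent K ![w, u] := by
  rw [triple_product_eq_det, ← det_of_vec3_eq_zero_iff]
  rfl

theorem exists_add_smul_eq_add_smul_iff_sub_mem_span_pair {R M : Type*} [CommRing R]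
    [AddCommGroup M] [Module R M] (e w a u : M) :
    (∃ s t : R, e + s • w = a + t • u) ↔ e - a ∈ Submodule.span R {w, u} := by
  rw [Submodule.mem_span_pair]
  constructor
  · rintro ⟨s, t, h⟩
    exact ⟨-s, t, by linear_combination (norm := module) -h⟩
  · rintro ⟨s, t, h⟩
    exact ⟨-s, t, by linear_combination (norm := module) -h⟩

theorem velocities_span_ne_top_iff_incident_line_general
    (n : ℕ) (a u : Fin n → (Fin 3 → ℝ)) (e : Fin 3 → ℝ) :
    Submodule.span ℝ (Set.range fun i => crossProduct (u i) (e - a i)) ≠ ⊤ ↔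
      ∃ w : Fin 3 → ℝ, w ≠ 0 ∧ ∀ i,
        ((∃ s t : ℝ, e + s • w = a i + t • u i) ∨ ¬ LinearIndependent ℝ ![w, u i]) := by
  simp only [span_ne_top_iff_exists_dotProduct_eq_zero, Set.forall_mem_range,
    dotProduct_crossProduct_eq_zero_iff, exists_add_smul_eq_add_smul_iff_sub_mem_span_pair]

/-- For lines `A i = {a i + t • u i}` in `ℝ³` and a point `e`, the velocities
`v i = u i ×₃ (e - a i)` of `e` under the infinitesimal rotations about the lines `A i`
fail to span `ℝ³` iff there is a line through `e` (with some nonzero direction `w`)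
projectively incident with every `A i`. -/
theorem velocities_span_ne_top_iff_incident_line
    (n : ℕ) (a u : Fin n → (Fin 3 → ℝ)) (e : Fin 3 → ℝ)
    (hu : ∀ i, u i ⬝ᵥ u i = 1) :
    Submodule.span ℝ (Set.range fun i => crossProduct (u i) (e - a i)) ≠ ⊤ ↔
      ∃ w : Fin 3 → ℝ, w ≠ 0 ∧ ∀ i,
        ((∃ s t : ℝ, e + s • w = a i + t • u i) ∨ ¬ LinearIndependent ℝ ![w, u i]) :=
  velocities_span_ne_top_iff_incident_line_general n a u e
end

section
/- Fix d ≥ 2 and points p_{ij}, q_{ij} ∈ R^{d+1} for 1 ≤ i < j ≤ d+1. The homogeneous linear system ⟨A q_{ij}, p_{ij}⟩ = 0 (for all i < j) in the unknown (d+1)×(d+1) antisymmetric matrix A has a nonzero solution if and only if the C(d+1,2) exterior 2-vectors p_{ij} ∧ q_{ij} are linearly dependent in Λ²(R^{d+1}). -/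
/-!
Pairing `x ∧ y` with an antisymmetric matrix `A` through `xᵀ A y` identifies antisymmetric
matrices with linear forms on `Λ²(ℝ^{d+1})`, and the system `⟨A q_ij, p_ij⟩ = 0` says that the
form of `A` kills every `p_ij ∧ q_ij`. There are exactly `C(d+1, 2) = dim Λ²` of these 2-vectors,
so they are dependent iff they fail to span, iff some nonzero linear form vanishes on all of them.
-/

open Matrix ExteriorAlgebra

open Module Submodule

section Duality

variable {K W ι : Type*} [Field K] [AddCommGroup W] [Module K W] [FiniteDimensional K W]
  [Fintype ι] {v : ι → W}

theorem linearIndependent_iff_span_eq_top_of_card_eq_finrank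
    (hcard : Fintype.card ι = finrank K W) :
    LinearIndependent K v ↔ span K (Set.range v) = ⊤ :=
  ⟨fun h ↦ h.span_eq_top_of_card_eq_finrank' hcard,
    fun h ↦ linearIndependent_of_top_le_span_of_card_eq_finrank h.ge hcard⟩

theorem not_linearIndependent_iff_exists_dual_of_card_eq_finrank
    (hcard : Fintype.card ι = finrank K W) :
    ¬ LinearIndependent K v ↔ ∃ f : Dual K W, f ≠ 0 ∧ ∀ i, f (v i) = 0 := by
  rw [linearIndependent_iff_span_eq_top_of_card_eq_finrank hcard]
  constructor
  · intro hne
    obtain ⟨f, hf, hmap⟩ := exists_dual_map_eq_bot_of_lt_top (lt_top_iff_ne_top.2 hne) inferInstance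
    exact ⟨f, hf, fun i ↦ (Submodule.eq_bot_iff _).1 hmap _ (mem_map_of_mem (subset_span ⟨i, rfl⟩))⟩
  · rintro ⟨f, hf, hv⟩ htop
    exact hf (LinearMap.ext_on_range htop hv)

end Duality

section AlternatingBilinear

variable {R M N : Type*} [CommRing R] [AddCommGroup M] [Module R M] [AddCommGroup N] [Module R N]

def LinearMap.IsAlt.toAlternatingMap {B : M →ₗ[R] M →ₗ[R] N} (hB : B.IsAlt) :
    M [⋀^Fin 2]→ₗ[R] N where
  toFun v := B (v 0) (v 1)
  map_update_add' v i x y := by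
    fin_cases i <;> simp
  map_update_smul' v i c x := by
    fin_cases i <;> simp
  map_eq_zero_of_eq' v i j hv hij := by
    fin_cases i <;> fin_cases j <;> simp_all [hB.self_eq_zero]

@[simp]
theorem LinearMap.IsAlt.toAlternatingMap_apply {B : M →ₗ[R] M →ₗ[R] N} (hB : B.IsAlt)
    (v : Fin 2 → M) : hB.toAlternatingMap v = B (v 0) (v 1) := rfl

def AlternatingMap.toLinearMap₂ (g : M [⋀^Fin 2]→ₗ[R] N) : M →ₗ[R] M →ₗ[R] N :=
  LinearMap.mk₂ R (fun x y ↦ g ![x, y]) (fun x x' _ ↦ g.map_vecCons_add _ x x')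
    (fun c x _ ↦ g.map_vecCons_smul _ c x)
    (fun x y y' ↦ (g.curryLeft x).map_vecCons_add _ y y')
    (fun c x y ↦ (g.curryLeft x).map_vecCons_smul _ c y)

@[simp]
theorem AlternatingMap.toLinearMap₂_apply (g : M [⋀^Fin 2]→ₗ[R] N) (x y : M) :
    g.toLinearMap₂ x y = g ![x, y] := rfl

theorem AlternatingMap.isAlt_toLinearMap₂ (g : M [⋀^Fin 2]→ₗ[R] N) : g.toLinearMap₂.IsAlt :=
  fun x ↦ g.map_eq_zero_of_eq ![x, x] (i := 0) (j := 1) rfl (by decide)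

theorem AlternatingMap.eq_zero_of_toLinearMap₂_eq_zero {g : M [⋀^Fin 2]→ₗ[R] N}
    (hg : g.toLinearMap₂ = 0) : g = 0 := by
  ext v
  have hv : v = ![v 0, v 1] := by ext i; fin_cases i <;> rfl
  rw [hv]
  exact LinearMap.congr_fun₂ hg (v 0) (v 1)

end AlternatingBilinear

section SkewMatrix

variable {R n : Type*} [CommRing R] [Fintype n] [DecidableEq n]

-- In characteristic `2` the condition `Aᵀ = -A` does not force a zero diagonal.
theorem Matrix.isAlt_toLinearMap₂'_of_transpose_eq_neg [NoZeroDivisors R] [CharZero R]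
    {A : Matrix n n R} (hA : Aᵀ = -A) :
    (Matrix.toLinearMap₂' R A : (n → R) →ₗ[R] (n → R) →ₗ[R] R).IsAlt := by
  intro x
  rw [Matrix.toLinearMap₂'_apply', ← CharZero.eq_neg_self_iff]
  calc x ⬝ᵥ A *ᵥ x = (Aᵀ *ᵥ x) ⬝ᵥ x := by rw [mulVec_transpose, dotProduct_mulVec, dotProduct_comm]
    _ = -(x ⬝ᵥ A *ᵥ x) := by rw [hA, neg_mulVec, neg_dotProduct, dotProduct_comm]

theorem LinearMap.IsAlt.transpose_toMatrix₂' {B : (n → R) →ₗ[R] (n → R) →ₗ[R] R}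
    (hB : B.IsAlt) : (LinearMap.toMatrix₂' R B)ᵀ = -LinearMap.toMatrix₂' R B := by
  ext i j
  rw [transpose_apply, Matrix.neg_apply, LinearMap.toMatrix₂'_apply, LinearMap.toMatrix₂'_apply,
    hB.neg]

end SkewMatrix

section ExteriorSquare

variable {R M : Type*} [CommRing R] [AddCommGroup M] [Module R M]

theorem ExteriorAlgebra.ι_mul_ι_eq_ιMulti (x y : M) :
    ι R x * ι R y = (exteriorPower.ιMulti R 2 ![x, y] : ExteriorAlgebra R M) := by
  simp [ExteriorAlgebra.ιMulti_apply]

theorem card_subtype_lt_eq_finrank_exteriorPower_two (K ι : Type*) [Field K] [Fintype ι]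
    [LinearOrder ι] :
    Fintype.card {ij : ι × ι // ij.1 < ij.2} = finrank K (⋀[K]^2 (ι → K)) := by
  rw [exteriorPower.finrank_eq, Module.finrank_fintype_fun_eq_card, Fintype.card_subtype,
    Fintype.card_product_filter_lt]

theorem exists_skew_matrix_iff_exists_dual_exteriorPower_two {n ι : Type*} [Fintype n]
    [DecidableEq n] [NoZeroDivisors R] [CharZero R] (x y : ι → n → R) :
    (∃ A : Matrix n n R, A ≠ 0 ∧ Aᵀ = -A ∧ ∀ i, x i ⬝ᵥ A *ᵥ y i = 0) ↔
      ∃ f : Dual R (⋀[R]^2 (n → R)), f ≠ 0 ∧ ∀ i, f (exteriorPower.ιMulti R 2 ![x i, y i]) = 0 := by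
  constructor
  · rintro ⟨A, hA0, hA, hxy⟩
    have hB := Matrix.isAlt_toLinearMap₂'_of_transpose_eq_neg hA
    refine ⟨exteriorPower.alternatingMapLinearEquiv hB.toAlternatingMap, fun hf ↦ hA0 ?_,
      fun i ↦ by simpa [Matrix.toLinearMap₂'_apply'] using hxy i⟩
    apply (Matrix.toLinearMap₂' R (S₁ := R) (S₂ := R)).injective
    ext i j
    simpa using DFunLike.congr_fun hf (exteriorPower.ιMulti R 2 ![Pi.single i 1, Pi.single j 1])
  · rintro ⟨f, hf0, hxy⟩
    set g := f.compAlternatingMap (exteriorPower.ιMulti R 2)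
    refine ⟨LinearMap.toMatrix₂' R g.toLinearMap₂, fun hA ↦ hf0 ?_,
      g.isAlt_toLinearMap₂.transpose_toMatrix₂', fun i ↦ ?_⟩
    · refine exteriorPower.linearMap_ext (g.eq_zero_of_toLinearMap₂_eq_zero ?_)
      simpa using hA
    · rw [← Matrix.toLinearMap₂'_apply', Matrix.toLinearMap₂'_toMatrix']
      exact hxy i

end ExteriorSquare

theorem platform_flexible_iff_dependent_general
    (d : ℕ)
    (p q : {ij : Fin (d + 1) × Fin (d + 1) // ij.1 < ij.2} → (Fin (d + 1) → ℝ)) :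
    (∃ A : Matrix (Fin (d + 1)) (Fin (d + 1)) ℝ, A ≠ 0 ∧ Aᵀ = -A ∧
        ∀ ij, A.mulVec (q ij) ⬝ᵥ p ij = 0) ↔
      ¬ LinearIndependent ℝ
        (fun ij => ι ℝ (p ij) * ι ℝ (q ij) :
          {ij : Fin (d + 1) × Fin (d + 1) // ij.1 < ij.2} → ExteriorAlgebra ℝ (Fin (d + 1) → ℝ)) := by
  let w ij : ⋀[ℝ]^2 (Fin (d + 1) → ℝ) := exteriorPower.ιMulti ℝ 2 ![p ij, q ij]
  have hw : (fun ij ↦ ι ℝ (p ij) * ι ℝ (q ij)) = (⋀[ℝ]^2 (Fin (d + 1) → ℝ)).subtype ∘ w :=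
    funext fun ij ↦ ι_mul_ι_eq_ιMulti (p ij) (q ij)
  simp_rw [dotProduct_comm _ (p _)]
  rw [hw, LinearMap.linearIndependent_iff _ (Submodule.ker_subtype _),
    not_linearIndependent_iff_exists_dual_of_card_eq_finrank
      (card_subtype_lt_eq_finrank_exteriorPower_two ℝ _)]
  exact exists_skew_matrix_iff_exists_dual_exteriorPower_two p q

/-- For `d ≥ 2` and points `p ij, q ij ∈ ℝ^{d+1}` indexed by pairs `i < j` in
`Fin (d+1)`, the homogeneous system `⟨A (q ij), p ij⟩ = 0` in the unknown antisymmetric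
`(d+1)×(d+1)` matrix `A` has a nonzero solution iff the exterior 2-vectors `p ij ∧ q ij`
are linearly dependent in `Λ²(ℝ^{d+1})` (Proposition 7.1, platform flexibility). -/
theorem platform_flexible_iff_dependent
    (d : ℕ) (hd : 2 ≤ d)
    (p q : {ij : Fin (d + 1) × Fin (d + 1) // ij.1 < ij.2} → (Fin (d + 1) → ℝ)) :
    (∃ A : Matrix (Fin (d + 1)) (Fin (d + 1)) ℝ, A ≠ 0 ∧ Aᵀ = -A ∧
        ∀ ij, A.mulVec (q ij) ⬝ᵥ p ij = 0) ↔
      ¬ LinearIndependent ℝ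
        (fun ij => ι ℝ (p ij) * ι ℝ (q ij) :
          {ij : Fin (d + 1) × Fin (d + 1) // ij.1 < ij.2} → ExteriorAlgebra ℝ (Fin (d + 1) → ℝ)) :=
  platform_flexible_iff_dependent_general d p q
end

section
/- For every point t ∈ R, let C(t) = (t, t², t³) ∈ R^3 be a point on the twisted cubic and C'(t) = (1, 2t, 3t²) its velocity. Embedding R^3 as x_0 = 1 in R^4, the tangent line to the twisted cubic at C(t) has Plücker vector L(t) = (1, C(t)) ∧ (0, C'(t)) ∈ Λ²(R^4). Then all the vectors L(t), t ∈ R, lie in a common 5-dimensional linear subspace of the 6-dimensional space Λ²(R^4); i.e., there exists a nonzero linear functional on Λ²(R^4) vanishing on L(t) for all t ∈ R (the tangents of a twisted cubic lie in a linear complex). -/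
open ExteriorAlgebra

/-!
A linear complex is the kernel of a linear functional on `Λ²(ℝ⁴)`, so it suffices to exhibit a
nonzero Plücker-coordinate relation satisfied by every tangent. For
`L t = (1, t, t², t³) ∧ (0, 1, 2t, 3t²)` one computes `p₀₃ = 3t²` and `p₁₂ = t²`, so every
tangent lies in the complex `p₀₃ = 3 p₁₂`; being a hyperplane of the 6-dimensional `Λ²(ℝ⁴)`,
it has dimension 5.
-/

section LinearComplex

variable {R M : Type*} [CommRing R] [AddCommGroup M] [Module R M]

noncomputable def plueckerCoord (f g : Module.Dual R M) : Module.Dual R (⋀[R]^2 M) :=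
  exteriorPower.alternatingMapToDual R M 2 ![f, g]

lemma exteriorPower.coe_ιMulti_two (x y : M) :
    (exteriorPower.ιMulti R 2 ![x, y] : ExteriorAlgebra R M) = ι R x * ι R y := by
  simp [ExteriorAlgebra.ιMulti_apply]

lemma plueckerCoord_ιMulti (f g : Module.Dual R M) (x y : M) :
    plueckerCoord f g (exteriorPower.ιMulti R 2 ![x, y]) = f x * g y - g x * f y := by
  simp [plueckerCoord, Matrix.det_fin_two]

def linearComplex (φ : Module.Dual R (⋀[R]^2 M)) : Submodule R (ExteriorAlgebra R M) :=
  (LinearMap.ker φ).map (⋀[R]^2 M).subtype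

lemma linearComplex_le (φ : Module.Dual R (⋀[R]^2 M)) : linearComplex φ ≤ ⋀[R]^2 M := by
  rintro _ ⟨w, -, rfl⟩
  exact w.2

lemma ι_mul_ι_mem_linearComplex {φ : Module.Dual R (⋀[R]^2 M)} {x y : M}
    (h : φ (exteriorPower.ιMulti R 2 ![x, y]) = 0) : ι R x * ι R y ∈ linearComplex φ :=
  ⟨_, h, exteriorPower.coe_ιMulti_two x y⟩

lemma finrank_linearComplex {K V : Type*} [Field K] [AddCommGroup V] [Module K V]
    [FiniteDimensional K V] {φ : Module.Dual K (⋀[K]^2 V)} (hφ : φ ≠ 0) :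
    Module.finrank K (linearComplex φ) = (Module.finrank K V).choose 2 - 1 := by
  rw [linearComplex, Submodule.finrank_map_subtype_eq, ← exteriorPower.finrank_eq,
    ← φ.finrank_ker_add_one_of_ne_zero hφ, Nat.add_sub_cancel]

end LinearComplex

noncomputable def twistedCubicComplex : Module.Dual ℝ (⋀[ℝ]^2 (Fin 4 → ℝ)) :=
  plueckerCoord (LinearMap.proj 0) (LinearMap.proj 3) -
    3 • plueckerCoord (LinearMap.proj 1) (LinearMap.proj 2)

lemma twistedCubicComplex_ne_zero : twistedCubicComplex ≠ 0 := by
  intro h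
  have := LinearMap.congr_fun h (exteriorPower.ιMulti ℝ 2 ![Pi.single 0 1, Pi.single 3 1])
  simp [twistedCubicComplex, plueckerCoord_ιMulti] at this

/-- The tangent line of the twisted cubic `t ↦ (t, t², t³)` at the point with
parameter `t` has Plücker vector `L t = (1, t, t², t³) ∧ (0, 1, 2t, 3t²) ∈ Λ²(ℝ⁴)`. All
these Plücker vectors lie in a common 5-dimensional linear subspace of the 6-dimensional
space `Λ²(ℝ⁴)`: the tangents of a twisted cubic belong to a linear complex. -/
theorem twisted_cubic_tangents_in_linear_complex :
    ∃ S : Submodule ℝ (ExteriorAlgebra ℝ (Fin 4 → ℝ)),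
      S ≤ ⋀[ℝ]^2 (Fin 4 → ℝ) ∧ Module.finrank ℝ S = 5 ∧
      ∀ t : ℝ,
        ι ℝ (![1, t, t ^ 2, t ^ 3] : Fin 4 → ℝ)
            * ι ℝ (![0, 1, 2 * t, 3 * t ^ 2] : Fin 4 → ℝ) ∈ S := by
  refine ⟨linearComplex twistedCubicComplex, linearComplex_le _, ?_, fun t => ?_⟩
  · rw [finrank_linearComplex twistedCubicComplex_ne_zero, Module.finrank_fin_fun]
    rfl
  · apply ι_mul_ι_mem_linearComplex
    simp only [twistedCubicComplex, LinearMap.sub_apply, LinearMap.smul_apply,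
      plueckerCoord_ιMulti, LinearMap.coe_proj, Function.eval, Matrix.cons_val_zero,
      Matrix.cons_val_one, Matrix.cons_val, nsmul_eq_mul]
    ring
end

section
/- Let e ∈ R^d and let A be a codimension-two affine subspace of R^d not containing e. Let H be the affine hyperplane spanned by A and e. Let v(e) denote the velocity of e under an infinitesimal rotation about A, assumed nonzero. Then v(e) is orthogonal to the direction space of H, and for any nonzero w ∈ R^d: ⟨w, v(e)⟩ = 0 if and only if w lies in the direction space of H, if and only if the line {e + t·w : t ∈ R} is projectively incident with A. -/
open RealInnerProductSpace

/-- Let `A = a + D` be a codimension-two affine subspace of `ℝ^d` (direction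
space `D`, `dim D = d - 2`) and `e ∉ A`. Let `ρ` be an infinitesimal rotation about `A`:
a skew-symmetric linear map vanishing on `D`, and let `v(e) = ρ (e - a)` be the (nonzero)
velocity of `e`. Let `H` be the affine hyperplane spanned by `A` and `e`, whose direction
space is `D ⊔ ℝ∙(e - a)`. Then `v(e)` is orthogonal to the direction space of `H`, and for
every nonzero `w`: `⟪w, v(e)⟫ = 0` iff `w` lies in the direction space of `H`, iff the line
through `e` with direction `w` meets `A` or is parallel to `A` (projective incidence). -/
theorem velocity_orthogonal_iff_incident_general
    (d : ℕ) (hd : 3 ≤ d)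
    (D : Submodule ℝ (EuclideanSpace ℝ (Fin d))) (hD : Module.finrank ℝ D = d - 2)
    (a e : EuclideanSpace ℝ (Fin d)) (he : e - a ∉ D)
    (ρ : EuclideanSpace ℝ (Fin d) →ₗ[ℝ] EuclideanSpace ℝ (Fin d))
    (hρD : ∀ x ∈ D, ρ x = 0)
    (hskew : ∀ x y : EuclideanSpace ℝ (Fin d), ⟪ρ x, y⟫ = -⟪x, ρ y⟫)
    (hv : ρ (e - a) ≠ 0) :
    ρ (e - a) ∈ (D ⊔ (ℝ ∙ (e - a)))ᗮ ∧
      ∀ w : EuclideanSpace ℝ (Fin d), w ≠ 0 →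
        ((⟪w, ρ (e - a)⟫ = 0 ↔ w ∈ D ⊔ (ℝ ∙ (e - a))) ∧
          (w ∈ D ⊔ (ℝ ∙ (e - a)) ↔
            ((∃ t : ℝ, (e + t • w) - a ∈ D) ∨ w ∈ D))) := by
  set v := ρ (e - a) with hvdef
  set K := D ⊔ (ℝ ∙ (e - a)) with hKdef
  have hea : e - a ≠ 0 := fun h => he (h ▸ D.zero_mem)
  -- v ∈ Kᗮ
  have hvK : v ∈ Kᗮ := by
    rw [Submodule.mem_orthogonal]
    intro u hu
    rcases Submodule.mem_sup.mp hu with ⟨x, hx, y, hy, rfl⟩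
    rcases Submodule.mem_span_singleton.mp hy with ⟨c, rfl⟩
    have h1 : ⟪x, v⟫ = 0 := by
      have h := hskew x (e - a)
      rw [hρD x hx, inner_zero_left] at h
      have : ⟪x, ρ (e - a)⟫ = 0 := by linarith
      exact this
    have h2 : ⟪(e - a : EuclideanSpace ℝ (Fin d)), v⟫ = 0 := by
      have h := hskew (e - a) (e - a)
      have hcomm : ⟪v, e - a⟫ = ⟪(e - a : EuclideanSpace ℝ (Fin d)), v⟫ :=
        real_inner_comm _ _
      rw [hcomm] at h
      linarith [h]
    rw [inner_add_left, inner_smul_left, h1, h2]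
    simp
  refine ⟨hvK, ?_⟩
  -- dimension count
  have hdim1 : Module.finrank ℝ (ℝ ∙ (e - a)) = 1 := finrank_span_singleton hea
  have hdisj : D ⊓ (ℝ ∙ (e - a)) = ⊥ :=
    ((Submodule.disjoint_span_singleton' hea).mpr he).eq_bot
  have hKrank : Module.finrank ℝ K = d - 1 := by
    have h := Submodule.finrank_sup_add_finrank_inf_eq D (ℝ ∙ (e - a))
    rw [hdisj, hdim1, hD] at h
    simp only [finrank_bot] at h
    rw [← hKdef] at h
    omega
  have htot : Module.finrank ℝ K + Module.finrank ℝ Kᗮ =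
      Module.finrank ℝ (EuclideanSpace ℝ (Fin d)) :=
    Submodule.finrank_add_finrank_orthogonal K
  have hErank : Module.finrank ℝ (EuclideanSpace ℝ (Fin d)) = d := by
    simp [finrank_euclideanSpace]
  have hKperp : Module.finrank ℝ Kᗮ = 1 := by
    rw [hKrank, hErank] at htot; omega
  have hspan : (ℝ ∙ v) = Kᗮ := by
    apply Submodule.eq_of_le_of_finrank_le
    · exact (Submodule.span_singleton_le_iff_mem v _).mpr hvK
    · rw [hKperp, finrank_span_singleton hv]
  intro w hw
  constructor
  · -- inner iff membership
    have : w ∈ K ↔ w ∈ Kᗮᗮ := by rw [Submodule.orthogonal_orthogonal]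
    rw [this, ← hspan]
    rw [Submodule.mem_orthogonal_singleton_iff_inner_right]
    exact ⟨fun h => by rw [real_inner_comm]; exact h, fun h => by rw [real_inner_comm] at h; exact h⟩
  · constructor
    · intro hwK
      rcases Submodule.mem_sup.mp hwK with ⟨x, hx, y, hy, rfl⟩
      rcases Submodule.mem_span_singleton.mp hy with ⟨c, rfl⟩
      by_cases hc : c = 0
      · right; simpa [hc] using hx
      · left
        refine ⟨-c⁻¹, ?_⟩
        have : e + (-c⁻¹) • (x + c • (e - a)) - a =
            (e - a) + ((-c⁻¹) • x + (-c⁻¹ * c) • (e - a)) := by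
          module
        rw [this]
        rw [show (-c⁻¹ * c : ℝ) = -1 by field_simp]
        have : (e - a) + ((-c⁻¹) • x + (-1 : ℝ) • (e - a)) = (-c⁻¹) • x := by module
        rw [this]
        exact D.smul_mem _ hx
    · rintro (⟨t, ht⟩ | hwD)
      · by_cases htz : t = 0
        · exfalso; apply he; simpa [htz] using ht
        · have : w = t⁻¹ • ((e + t • w - a) - (e - a)) := by
            rw [show (e + t • w - a) - (e - a) = t • w by module]
            rw [smul_smul, inv_mul_cancel₀ htz, one_smul]
          rw [this]
          apply Submodule.smul_mem
          apply Submodule.sub_mem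
          · exact Submodule.mem_sup_left ht
          · exact Submodule.mem_sup_right (Submodule.mem_span_singleton_self _)
      · exact Submodule.mem_sup_left hwD
end
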